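/- Let A be a set of k integers with min(A) = 0 and gcd of the elements of A (with 0 removed) equal to 1, and suppose |A + A| > |A - A|. Then for all n ≥ k and m > 2·max(A), the set B = {Σ_{i=0}^{n-1} a_i m^i : a_i ∈ A} satisfies |B + B| ≥ |B - B| + |B|. -/
import Mathlib

open Pointwise Finset

private lemma digits_zero (m : ℤ) (hm : 0 < m) :
    ∀ (n : ℕ) (d : Fin n → ℤ), (∀ i, |d i| < m) →
      (∑ i, d i * m ^ (i : ℕ)) = 0 → ∀ i, d i = 0 := by
  intro n
  induction n with
  | zero => intro d _ _ i; exact i.elim0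
  | succ n ih =>
    intro d hd hsum
    rw [Fin.sum_univ_succ] at hsum
    have hrw : ∀ i : Fin n, d i.succ * m ^ (i.succ : ℕ) = m * (d i.succ * m ^ (i : ℕ)) := by
      intro i; rw [Fin.val_succ, pow_succ]; ring
    rw [Finset.sum_congr rfl (fun i _ => hrw i), ← Finset.mul_sum] at hsum
    set T := ∑ i : Fin n, d i.succ * m ^ (i : ℕ) with hT
    have hsum' : d 0 + m * T = 0 := by simpa using hsum
    have h0 : d 0 = 0 :=
      Int.eq_zero_of_abs_lt_dvd ⟨-T, by rw [mul_neg]; linarith⟩ (hd 0)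
    have hTz : T = 0 := by
      have hmT : m * T = 0 := by linarith
      exact (mul_eq_zero.1 hmT).resolve_left (by linarith)
    intro i
    refine Fin.cases h0 (fun j => ?_) i
    exact ih (fun j => d j.succ) (fun j => hd j.succ) hTz j

private lemma eval_injOn (n : ℕ) (m : ℤ) (hm : 0 < m) (S : Finset ℤ)
    (hS : ∀ x ∈ S, ∀ y ∈ S, |x - y| < m) :
    Set.InjOn (fun a : Fin n → ℤ => ∑ i, a i * m ^ (i : ℕ))
      (Fintype.piFinset fun _ : Fin n => S) := by
  intro f hf g hg heq
  have hf' : ∀ i, f i ∈ S := by simpa [Fintype.mem_piFinset] using hf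
  have hg' : ∀ i, g i ∈ S := by simpa [Fintype.mem_piFinset] using hg
  have hsum : (∑ i : Fin n, (f i - g i) * m ^ (i : ℕ)) = 0 := by
    simp only [sub_mul, Finset.sum_sub_distrib]
    simpa using sub_eq_zero_of_eq heq
  have := digits_zero m hm n (fun i => f i - g i)
    (fun i => hS _ (hf' i) _ (hg' i)) hsum
  funext i
  have h : f i - g i = 0 := this i
  linarith

private lemma card_eval (n : ℕ) (m : ℤ) (hm : 0 < m) (S : Finset ℤ)
    (hS : ∀ x ∈ S, ∀ y ∈ S, |x - y| < m) :
    ((Fintype.piFinset fun _ : Fin n => S).image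
      (fun a => ∑ i : Fin n, a i * m ^ (i : ℕ))).card = S.card ^ n := by
  rw [Finset.card_image_of_injOn (eval_injOn n m hm S hS), Fintype.card_piFinset]
  simp

private lemma piFinset_add' (n : ℕ) (S T : Finset ℤ) :
    (Fintype.piFinset fun _ : Fin n => S) + (Fintype.piFinset fun _ : Fin n => T)
      = Fintype.piFinset fun _ : Fin n => S + T := by
  ext f
  simp only [Finset.mem_add, Fintype.mem_piFinset]
  constructor
  · rintro ⟨g, hg, h, hh, rfl⟩ i
    exact ⟨g i, hg i, h i, hh i, rfl⟩
  · intro hf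
    have : ∀ i, ∃ a ∈ S, ∃ b ∈ T, a + b = f i := fun i => hf i
    choose g hg h hh hsum using this
    exact ⟨g, hg, h, hh, funext hsum⟩

private lemma piFinset_sub' (n : ℕ) (S T : Finset ℤ) :
    (Fintype.piFinset fun _ : Fin n => S) - (Fintype.piFinset fun _ : Fin n => T)
      = Fintype.piFinset fun _ : Fin n => S - T := by
  ext f
  simp only [Finset.mem_sub, Fintype.mem_piFinset]
  constructor
  · rintro ⟨g, hg, h, hh, rfl⟩ i
    exact ⟨g i, hg i, h i, hh i, rfl⟩
  · intro hf
    have : ∀ i, ∃ a ∈ S, ∃ b ∈ T, a - b = f i := fun i => hf i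
    choose g hg h hh hsum using this
    exact ⟨g, hg, h, hh, funext hsum⟩

private lemma image_sub'' {n : ℕ} (E : (Fin n → ℤ) →+ ℤ) (s t : Finset (Fin n → ℤ)) :
    (s - t).image E = s.image E - t.image E :=
  Finset.image_image₂_distrib <| map_sub E

private lemma binom (j q : ℕ) : q ^ (j + 1) + (j + 1) * q ^ j ≤ (q + 1) ^ (j + 1) := by
  induction j with
  | zero => simp [pow_succ]
  | succ j ih =>
    have h1 : (q + 1) ^ (j + 2) = (q + 1) ^ (j + 1) * (q + 1) := by ring
    have h2 : (q ^ (j + 1) + (j + 1) * q ^ j) * (q + 1) ≤ (q + 1) ^ (j + 1) * (q + 1) :=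
      Nat.mul_le_mul_right _ ih
    have h3 : q ^ (j + 2) + (j + 2) * q ^ (j + 1) ≤ (q ^ (j + 1) + (j + 1) * q ^ j) * (q + 1) := by
      have e1 : q ^ (j + 2) = q ^ (j + 1) * q := pow_succ q (j + 1)
      have e2 : q ^ (j + 1) = q ^ j * q := pow_succ q j
      nlinarith [Nat.zero_le ((j + 1) * q ^ j)]
    show q ^ (j + 2) + (j + 2) * q ^ (j + 1) ≤ (q + 1) ^ (j + 2)
    exact le_trans h3 (le_trans h2 (le_of_eq h1.symm))

theorem stmt_17 (A : Finset ℤ) (k : ℕ) (hA : A.Nonempty) (hk : A.card = k)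
    (hmin : A.min' hA = 0) (hgcd : (A.erase 0).gcd id = 1)
    (hmstd : (A - A).card < (A + A).card)
    (n : ℕ) (hn : k ≤ n) (m : ℤ) (hm : 2 * A.max' hA < m)
    (B : Finset ℤ)
    (hB : B = (Fintype.piFinset fun _ : Fin n => A).image
      (fun a => ∑ i : Fin n, a i * m ^ (i : ℕ))) :
    (B - B).card + B.card ≤ (B + B).card := by
  set M := A.max' hA with hM
  have hM0 : 0 ≤ M := by
    have := A.min'_le _ (A.max'_mem hA)
    rw [hmin] at this; exact this
  have hm0 : 0 < m := by linarith
  have hbound : ∀ a ∈ A, 0 ≤ a ∧ a ≤ M := by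
    intro a ha
    exact ⟨hmin ▸ A.min'_le a ha, A.le_max' a ha⟩
  -- bounds for A, A+A, A-A
  have hSA : ∀ x ∈ A, ∀ y ∈ A, |x - y| < m := by
    intro x hx y hy
    obtain ⟨hx0, hxM⟩ := hbound x hx
    obtain ⟨hy0, hyM⟩ := hbound y hy
    rw [abs_lt]; constructor <;> linarith
  have hSAA : ∀ x ∈ A + A, ∀ y ∈ A + A, |x - y| < m := by
    intro x hx y hy
    obtain ⟨a, ha, b, hb, rfl⟩ := Finset.mem_add.1 hx
    obtain ⟨c, hc, d, hd, rfl⟩ := Finset.mem_add.1 hy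
    obtain ⟨ha0, haM⟩ := hbound a ha
    obtain ⟨hb0, hbM⟩ := hbound b hb
    obtain ⟨hc0, hcM⟩ := hbound c hc
    obtain ⟨hd0, hdM⟩ := hbound d hd
    rw [abs_lt]; constructor <;> linarith
  have hSAs : ∀ x ∈ A - A, ∀ y ∈ A - A, |x - y| < m := by
    intro x hx y hy
    obtain ⟨a, ha, b, hb, rfl⟩ := Finset.mem_sub.1 hx
    obtain ⟨c, hc, d, hd, rfl⟩ := Finset.mem_sub.1 hy
    obtain ⟨ha0, haM⟩ := hbound a ha
    obtain ⟨hb0, hbM⟩ := hbound b hb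
    obtain ⟨hc0, hcM⟩ := hbound c hc
    obtain ⟨hd0, hdM⟩ := hbound d hd
    rw [abs_lt]; constructor <;> linarith
  -- the evaluation AddMonoidHom
  set E : (Fin n → ℤ) →+ ℤ :=
    { toFun := fun a => ∑ i : Fin n, a i * m ^ (i : ℕ)
      map_zero' := by simp
      map_add' := by
        intro a b
        simp [add_mul, Finset.sum_add_distrib] } with hE
  have hBE : B = (Fintype.piFinset fun _ : Fin n => A).image E := hB
  have hBadd : B + B = (Fintype.piFinset fun _ : Fin n => A + A).image E := by
    rw [hBE, ← Finset.image_add, piFinset_add']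
  have hBsub : B - B = (Fintype.piFinset fun _ : Fin n => A - A).image E := by
    rw [hBE, ← image_sub'', piFinset_sub']
  have hcB : B.card = k ^ n := by rw [hBE, ← hk]; exact card_eval n m hm0 A hSA
  have hcadd : (B + B).card = (A + A).card ^ n := by
    rw [hBadd]; exact card_eval n m hm0 (A + A) hSAA
  have hcsub : (B - B).card = (A - A).card ^ n := by
    rw [hBsub]; exact card_eval n m hm0 (A - A) hSAs
  rw [hcB, hcadd, hcsub]
  -- arithmetic
  set q := (A - A).card with hq
  set p := (A + A).card with hp
  have hk1 : 1 ≤ k := by rw [← hk]; exact Finset.card_pos.2 hA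
  have hkq : k ≤ q := by
    rw [← hk]
    apply Finset.card_le_card
    intro a ha
    exact Finset.mem_sub.2 ⟨a, ha, 0, hmin ▸ A.min'_mem hA, sub_zero a⟩
  have hqp : q + 1 ≤ p := hmstd
  obtain ⟨j, rfl⟩ : ∃ j, n = j + 1 := ⟨n - 1, by omega⟩
  have h1 : k ^ (j + 1) ≤ (j + 1) * q ^ j := by
    calc k ^ (j + 1) = k * k ^ j := by ring
    _ ≤ (j + 1) * q ^ j := Nat.mul_le_mul (by omega) (Nat.pow_le_pow_left hkq j)
  calc q ^ (j + 1) + k ^ (j + 1) ≤ q ^ (j + 1) + (j + 1) * q ^ j := by omega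
  _ ≤ (q + 1) ^ (j + 1) := binom j q
  _ ≤ p ^ (j + 1) := Nat.pow_le_pow_left hqp _
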